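/- Weak duality for the robustness-of-coherence SDP: for any density matrix ρ and any Hermitian matrix S with S ≥ 0 and all diagonal entries S_ii = 1, one has tr(ρS) ≤ 1 + C_R(ρ). -/

import Mathlib

open Matrix ComplexOrder

/-- A density matrix: positive semidefinite with unit trace. -/
def IsDensity {n : Type*} [Fintype n] [DecidableEq n] (ρ : Matrix n n ℂ) : Prop :=
  ρ.PosSemidef ∧ ρ.trace = 1

/-- Robustness of coherence:
`C_R(ρ) = min{ λ : ρ ≤ λσ, σ incoherent density matrix } − 1`. -/
noncomputable def CR {n : Type*} [Fintype n] [DecidableEq n] (ρ : Matrix n n ℂ) : ℝ :=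
  sInf {l : ℝ | ∃ σ : Matrix n n ℂ, IsDensity σ ∧ σ.IsDiag ∧
    ((l : ℂ) • σ - ρ).PosSemidef} - 1

lemma diag_nonneg_of_psd {n : Type*} [Fintype n] [DecidableEq n] {A : Matrix n n ℂ}
    (hA : A.PosSemidef) (i : n) : 0 ≤ A i i := by
  have := hA.diag_nonneg (i := i)
  simpa [dotProduct, mulVec, Pi.single_apply] using this

lemma trace_nonneg_of_psd {n : Type*} [Fintype n] [DecidableEq n] {A : Matrix n n ℂ}
    (hA : A.PosSemidef) : 0 ≤ A.trace := by
  rw [Matrix.trace]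
  exact Finset.sum_nonneg fun i _ => diag_nonneg_of_psd hA i

open scoped MatrixOrder in
lemma trace_mul_nonneg {n : Type*} [Fintype n] [DecidableEq n] {A B : Matrix n n ℂ}
    (hA : A.PosSemidef) (hB : B.PosSemidef) : 0 ≤ (A * B).trace := by
  have h1 : A = CFC.sqrt A * CFC.sqrt A := (CFC.sqrt_mul_sqrt_self A hA.nonneg).symm
  have h2 : (A * B).trace = (CFC.sqrt A * B * CFC.sqrt A).trace := by
    conv_lhs => rw [h1]
    rw [mul_assoc, Matrix.trace_mul_comm, mul_assoc]
  rw [h2]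
  have hpsd : (CFC.sqrt A * B * CFC.sqrt A).PosSemidef := by
    have := hB.conjTranspose_mul_mul_same (CFC.sqrt A)
    rwa [(CFC.sqrt_nonneg A).posSemidef.1.eq] at this
  exact trace_nonneg_of_psd hpsd

lemma one_sub_psd {n : Type*} [Fintype n] [DecidableEq n] {ρ : Matrix n n ℂ}
    (hρ : IsDensity ρ) : (1 - ρ).PosSemidef := by
  obtain ⟨hpsd, htr⟩ := hρ
  have hherm := hpsd.1
  -- trace = sum of eigenvalues
  have htr_eig : (Matrix.diagonal (RCLike.ofReal ∘ hherm.eigenvalues) : Matrix n n ℂ).trace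
      = ρ.trace := by
    conv_rhs => rw [hherm.spectral_theorem, Unitary.conjStarAlgAut_apply]
    rw [Matrix.trace_mul_cycle]
    congr 1
    rw [(Matrix.mem_unitaryGroup_iff').mp (hherm.eigenvectorUnitary).2, one_mul]
  have hsum : ∑ i, hherm.eigenvalues i = 1 := by
    have : ((∑ i, hherm.eigenvalues i : ℝ) : ℂ) = 1 := by
      rw [← htr] ; rw [← htr_eig]
      simp [Matrix.trace, Matrix.diagonal]
    exact_mod_cast this
  have heig_le : ∀ i, hherm.eigenvalues i ≤ 1 := by
    intro i
    rw [← hsum]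
    exact Finset.single_le_sum (fun j _ => hpsd.eigenvalues_nonneg j) (Finset.mem_univ i)
  -- 1 - ρ = U (1 - D) Uᴴ
  set U : Matrix n n ℂ := (hherm.eigenvectorUnitary : Matrix n n ℂ)
  have hU : U * star U = 1 := (Matrix.mem_unitaryGroup_iff).mp (hherm.eigenvectorUnitary).2
  have hdecomp : 1 - ρ = U * Matrix.diagonal
      (fun i => (1 : ℂ) - (hherm.eigenvalues i : ℂ)) * star U := by
    have hone : Matrix.diagonal (fun i => (1 : ℂ) - (hherm.eigenvalues i : ℂ))
        = 1 - Matrix.diagonal (RCLike.ofReal ∘ hherm.eigenvalues) := by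
      rw [← Matrix.diagonal_one, Matrix.diagonal_sub]
      rfl
    conv_lhs => rw [← hU, hherm.spectral_theorem, Unitary.conjStarAlgAut_apply]
    rw [hone, Matrix.mul_sub, Matrix.mul_one, Matrix.sub_mul]
  rw [hdecomp]
  have hdiag : (Matrix.diagonal (fun i => (1 : ℂ) - (hherm.eigenvalues i : ℂ))).PosSemidef := by
    rw [Matrix.posSemidef_diagonal_iff]
    intro i
    rw [sub_nonneg]
    have : ((hherm.eigenvalues i : ℝ) : ℂ) ≤ ((1 : ℝ) : ℂ) := by
      exact_mod_cast Complex.real_le_real.mpr (heig_le i)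
    simpa using this
  have := hdiag.mul_mul_conjTranspose_same U
  simpa [Matrix.star_eq_conjTranspose] using this

/-- Weak duality for the robustness-of-coherence SDP: for any density matrix `ρ` and
any positive semidefinite `S` with unit diagonal, `tr(ρS) ≤ 1 + C_R(ρ)`. -/
theorem cr_sdp_weak_duality {d : ℕ} (ρ S : Matrix (Fin d) (Fin d) ℂ)
    (hρ : IsDensity ρ) (hS : S.PosSemidef) (hSdiag : ∀ i, S i i = 1) :
    (ρ * S).trace ≤ ((1 + CR ρ : ℝ) : ℂ) := by
  rcases Nat.eq_zero_or_pos d with hd | hd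
  · subst hd
    have := hρ.2
    simp [Matrix.trace] at this
  set A := {l : ℝ | ∃ σ : Matrix (Fin d) (Fin d) ℂ, IsDensity σ ∧ σ.IsDiag ∧
    ((l : ℂ) • σ - ρ).PosSemidef} with hA
  have hdC : (d : ℂ) ≠ 0 := by positivity
  have hne : A.Nonempty := by
    refine ⟨(d : ℝ), (d : ℂ)⁻¹ • 1, ⟨⟨?_, ?_⟩, ?_, ?_⟩⟩
    · have hdiag : (d : ℂ)⁻¹ • (1 : Matrix (Fin d) (Fin d) ℂ)
          = Matrix.diagonal (fun _ => (d : ℂ)⁻¹) := by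
        ext i j
        by_cases h : i = j <;> simp [Matrix.one_apply, Matrix.diagonal, h]
      rw [hdiag, Matrix.posSemidef_diagonal_iff]
      intro i
      have : ((d : ℂ))⁻¹ = (((d : ℝ)⁻¹ : ℝ) : ℂ) := by push_cast; ring
      rw [this]
      have : (0:ℝ) ≤ (d : ℝ)⁻¹ := by positivity
      exact_mod_cast Complex.real_le_real.mpr this
    · simp [Matrix.trace_smul, Matrix.trace_one, inv_mul_cancel₀ hdC]
    · intro i j hij; simp [Matrix.one_apply, hij]
    · have : ((d : ℝ) : ℂ) • ((d : ℂ)⁻¹ • (1 : Matrix (Fin d) (Fin d) ℂ)) = 1 := by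
        rw [smul_smul]
        norm_cast
        rw [mul_inv_cancel₀ hdC, one_smul]
      rw [this]
      exact one_sub_psd hρ
  -- trace(ρ S) is a nonnegative real
  have htr_nonneg : 0 ≤ (ρ * S).trace := trace_mul_nonneg hρ.1 hS
  have him : (ρ * S).trace.im = 0 := by
    rw [Complex.le_def] at htr_nonneg; exact htr_nonneg.2.symm
  set r : ℝ := (ρ * S).trace.re with hr
  have htr_eq : (ρ * S).trace = (r : ℂ) := (Complex.ext_iff).mpr ⟨rfl, him⟩
  -- r is a lower bound for A
  have hlb : ∀ l ∈ A, r ≤ l := by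
    intro l hl
    obtain ⟨σ, hσd, hσdiag, hpsd⟩ := hl
    have h0 : 0 ≤ (((l : ℂ) • σ - ρ) * S).trace := trace_mul_nonneg hpsd hS
    have hσS : (σ * S).trace = 1 := by
      have e : (σ * S).trace = σ.trace := by
        unfold Matrix.trace
        apply Finset.sum_congr rfl
        intro i _
        simp only [Matrix.diag_apply, Matrix.mul_apply]
        rw [Finset.sum_eq_single i]
        · rw [hSdiag i, mul_one]
        · intro j _ hj; rw [hσdiag (Ne.symm hj), zero_mul]
        · intro h; exact absurd (Finset.mem_univ i) h
      rw [e, hσd.2]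
    have hexp : (((l : ℂ) • σ - ρ) * S).trace = (l : ℂ) - (ρ * S).trace := by
      rw [Matrix.sub_mul, Matrix.trace_sub, Matrix.smul_mul, Matrix.trace_smul, hσS]
      simp
    rw [hexp, sub_nonneg, htr_eq] at h0
    exact_mod_cast h0
  have hfin : r ≤ sInf A := le_csInf hne hlb
  rw [htr_eq]
  have : (1 : ℝ) + CR ρ = sInf A := by
    rw [CR]; ring_nf; rfl
  rw [this]
  exact_mod_cast hfin
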